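/- arXiv:2304.03075 — 6 statements merged into one kernel-verified Lean document; each statement's English description precedes it below -/
import Mathlib

section
/- Let a > 0, let (E_i)_{i≥1} be an i.i.d. sequence of exponential random variables with rate a on a probability space, and set T_0 = 0 and T_k = E_1 + ⋯ + E_k for k ≥ 1. Let F : ℝ → ℝ be nondecreasing with 0 ≤ F(x) ≤ 1 for all x and ∫_0^∞ (1 − F(y)) dy < ∞, and let t > 0 satisfy F(t) > 0. Then the infinite product ∏_{i=0}^∞ F(t + T_i) converges almost surely to a random variable taking values in (0,1], and E[∏_{i=0}^∞ F(t + T_i)] > 0. -/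
/-!
By the strong law of large numbers, applied to the bounded variables `min (E i) 1`, almost surely
`T n ≥ c * n` for some `c > 0` and all large `n`. Since `1 - F` is antitone and integrable, the
integral test gives `∑ (1 - F (t + c * n)) < ∞`, hence `∑ (1 - F (t + T n)) < ∞` a.s. All factors
lie in `[F t, 1]` with `F t > 0`, so `log` of the factors is summable and the product
`exp (∑ log F (t + T n))` lies in `(0, 1]`. An a.s. positive bounded variable has positive mean.
-/

open MeasureTheory ProbabilityTheory Real Filter Set

lemma ae_pos_expMeasure (r : ℝ) : ∀ᵐ x ∂expMeasure r, 0 < x := by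
  rw [ae_iff]
  simp only [not_lt]
  change expMeasure r (Iic 0) = 0
  rw [expMeasure, gammaMeasure, withDensity_apply _ measurableSet_Iic,
    setLIntegral_congr Iio_ae_eq_Iic.symm]
  exact lintegral_gammaPDF_of_nonpos le_rfl

lemma integral_pos_of_ae_pos {α : Type*} [MeasurableSpace α] {μ : Measure α} [NeZero μ]
    {f : α → ℝ} (hfi : Integrable f μ) (hpos : ∀ᵐ x ∂μ, 0 < f x) : 0 < ∫ x, f x ∂μ := by
  rw [integral_pos_iff_support_of_nonneg_ae (hpos.mono fun _ h => h.le) hfi]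
  refine pos_iff_ne_zero.2 (frequently_ae_iff.1 ?_)
  exact hpos.frequently.mono fun _ h => h.ne'

theorem AntitoneOn.summable_comp_add_mul {f : ℝ → ℝ} {x₀ c : ℝ} (hc : 0 < c)
    (anti : AntitoneOn f (Ici x₀)) (integrable : IntegrableOn f (Ioi x₀))
    (nonneg : ∀ y ∈ Ioi x₀, 0 ≤ f y) :
    Summable fun n : ℕ => f (x₀ + c * n) := by
  have hmem : ∀ {x : ℝ}, 0 ≤ x → x₀ ≤ x₀ + c * x := fun hx => by nlinarith
  refine AntitoneOn.summable_of_integrableOn_Ioi_zero (f := fun x => f (x₀ + c * x))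
    (fun x hx y hy hxy => anti (hmem hx) (hmem hy) (by gcongr)) ?_
    (fun x hx => nonneg _ (by simp only [mem_Ioi] at hx ⊢; nlinarith))
  rw [integrableOn_Ioi_comp_mul_left_iff (fun y => f (x₀ + y)) 0 hc, mul_zero]
  have := ((measurePreserving_add_left volume x₀).integrableOn_comp_preimage
    (measurableEmbedding_addLeft x₀)).2 integrable
  rwa [preimage_const_add_Ioi, sub_self] at this

lemma Real.multipliable_tprod_pos_le_one_of_summable_one_sub {ι : Type*} {x : ι → ℝ}
    (hpos : ∀ i, 0 < x i) (hle : ∀ i, x i ≤ 1) (hsum : Summable fun i => 1 - x i) :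
    Multipliable x ∧ 0 < ∏' i, x i ∧ ∏' i, x i ≤ 1 := by
  have hlog : Summable fun i => Real.log (x i) := by
    simpa using Real.summable_log_one_add_of_summable hsum.neg
  rw [← Real.rexp_tsum_eq_tprod hpos hlog, Real.exp_le_one_iff]
  exact ⟨Real.multipliable_of_summable_log hpos hlog, Real.exp_pos _,
    tsum_nonpos fun i => Real.log_nonpos (hpos i).le (hle i)⟩

theorem exists_pos_eventually_mul_le_sum {Ω : Type*} [MeasurableSpace Ω] {P : Measure Ω}
    [IsProbabilityMeasure P] {E : ℕ → Ω → ℝ}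
    (hindep : Pairwise fun i j => IndepFun (E i) (E j) P)
    (hident : ∀ i, IdentDistrib (E i) (E 0) P P) (hpos : ∀ᵐ ω ∂P, 0 < E 0 ω) :
    ∃ c > 0, ∀ᵐ ω ∂P, ∀ᶠ n : ℕ in atTop, c * n ≤ ∑ j ∈ Finset.range n, E j ω := by
  -- the truncation `min (E j) 1` is integrable, so the strong law applies to it
  set Y : ℕ → Ω → ℝ := fun j ω => min (E j ω) 1
  have htrunc : Measurable fun x : ℝ => min x 1 := measurable_id.min measurable_const
  have hYpos : ∀ᵐ ω ∂P, 0 < Y 0 ω := hpos.mono fun _ h => lt_min h one_pos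
  have hYint : Integrable (Y 0) P := by
    refine .of_bound ((hident 0).aemeasurable_fst.min aemeasurable_const).aestronglyMeasurable
      1 (hYpos.mono fun ω h => ?_)
    rw [Real.norm_of_nonneg h.le]
    exact min_le_right _ _
  have hslln := strong_law_ae_real Y hYint (fun i j hij => (hindep hij).comp htrunc htrunc)
    fun i => (hident i).comp htrunc
  have hm : 0 < P[Y 0] := integral_pos_of_ae_pos hYint hYpos
  refine ⟨P[Y 0] / 2, half_pos hm, ?_⟩
  filter_upwards [hslln] with ω hω
  filter_upwards [hω.eventually (eventually_ge_nhds (half_lt_self hm)), eventually_gt_atTop 0]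
    with n hn hn0
  rw [le_div_iff₀ (by exact_mod_cast hn0)] at hn
  exact hn.trans (Finset.sum_le_sum fun j _ => min_le_left _ _)

theorem Monotone.multipliable_comp_add_of_eventually_mul_le {F : ℝ → ℝ} (hmono : Monotone F)
    (hF1 : ∀ x, F x ≤ 1) {t c : ℝ} (hFt : 0 < F t)
    (hsum : Summable fun n : ℕ => 1 - F (t + c * n)) {T : ℕ → ℝ} (hT0 : ∀ n, 0 ≤ T n)
    (hT : ∀ᶠ n in atTop, c * n ≤ T n) :
    Multipliable (fun n => F (t + T n)) ∧ 0 < ∏' n, F (t + T n) ∧ ∏' n, F (t + T n) ≤ 1 := by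
  refine Real.multipliable_tprod_pos_le_one_of_summable_one_sub
    (fun n => hFt.trans_le (hmono (le_add_of_nonneg_right (hT0 n)))) (fun n => hF1 _)
    (hsum.of_norm_bounded_eventually_nat (hT.mono fun n hn => ?_))
  rw [Real.norm_of_nonneg (sub_nonneg.2 (hF1 _))]
  linarith [hmono (by linarith : t + c * n ≤ t + T n)]

theorem infinite_product_cluster_lengths_positive_general
    {Ω : Type*} [MeasurableSpace Ω] (P : Measure Ω) [IsProbabilityMeasure P]
    (a : ℝ) (E : ℕ → Ω → ℝ)
    (hmeas : ∀ i, Measurable (E i))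
    (hindep : iIndepFun E P)
    (hdist : ∀ i, Measure.map (E i) P = expMeasure a)
    (F : ℝ → ℝ) (hmono : Monotone F) (hF1 : ∀ x, F x ≤ 1)
    (hint : IntegrableOn (fun y => 1 - F y) (Set.Ici (0 : ℝ)))
    (t : ℝ) (ht : 0 < t) (hFt : 0 < F t) :
    (∀ᵐ ω ∂P,
      Multipliable (fun i : ℕ => F (t + ∑ j ∈ Finset.range i, E j ω)) ∧
      0 < ∏' i : ℕ, F (t + ∑ j ∈ Finset.range i, E j ω) ∧
      (∏' i : ℕ, F (t + ∑ j ∈ Finset.range i, E j ω)) ≤ 1) ∧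
    0 < ∫ ω, (∏' i : ℕ, F (t + ∑ j ∈ Finset.range i, E j ω)) ∂P := by
  have hEpos : ∀ i, ∀ᵐ ω ∂P, 0 < E i ω := fun i =>
    ae_of_ae_map (hmeas i).aemeasurable (by rw [hdist i]; exact ae_pos_expMeasure a)
  obtain ⟨c, hc, hgrowth⟩ := exists_pos_eventually_mul_le_sum (fun i j hij => hindep.indepFun hij)
    (fun i => ⟨(hmeas i).aemeasurable, (hmeas 0).aemeasurable, by rw [hdist i, hdist 0]⟩)
    (hEpos 0)
  have hsum : Summable fun n : ℕ => 1 - F (t + c * n) :=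
    AntitoneOn.summable_comp_add_mul (f := fun y => 1 - F y) hc
      (fun x _ y _ hxy => sub_le_sub_left (hmono hxy) 1)
      (hint.mono_set (Ioi_subset_Ici ht.le)) fun y _ => sub_nonneg.2 (hF1 y)
  have hprod : ∀ᵐ ω ∂P,
      Multipliable (fun i : ℕ => F (t + ∑ j ∈ Finset.range i, E j ω)) ∧
      0 < ∏' i : ℕ, F (t + ∑ j ∈ Finset.range i, E j ω) ∧
      (∏' i : ℕ, F (t + ∑ j ∈ Finset.range i, E j ω)) ≤ 1 := by
    filter_upwards [ae_all_iff.2 hEpos, hgrowth] with ω hpos hω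
    exact hmono.multipliable_comp_add_of_eventually_mul_le hF1 hFt hsum
      (fun n => Finset.sum_nonneg fun j _ => (hpos j).le) hω
  refine ⟨hprod, integral_pos_of_ae_pos ?_ (hprod.mono fun _ h => h.2.1)⟩
  refine .of_bound (Measurable.aestronglyMeasurable ?_) 1 (hprod.mono fun ω h => ?_)
  · exact .tprod fun i => hmono.measurable.comp
      (measurable_const.add (Finset.measurable_sum _ fun j _ => hmeas j))
  · rw [Real.norm_of_nonneg h.2.1.le]
    exact h.2.2

/-- Let `(E_i)` be i.i.d. exponential(a) random variables, `T_k = E_1 + ⋯ + E_k` (`T_0 = 0`),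
and `F` nondecreasing with values in `[0,1]` and integrable tail `∫_0^∞ (1 - F) < ∞`.
If `F t > 0` for some `t > 0`, then the infinite product `∏_{i=0}^∞ F(t + T_i)` converges
a.s. to a random variable in `(0,1]` and its expectation is strictly positive. -/
theorem infinite_product_cluster_lengths_positive
    {Ω : Type*} [MeasurableSpace Ω] (P : Measure Ω) [IsProbabilityMeasure P]
    (a : ℝ) (ha : 0 < a) (E : ℕ → Ω → ℝ)
    (hmeas : ∀ i, Measurable (E i))
    (hindep : iIndepFun E P)
    (hdist : ∀ i, Measure.map (E i) P = expMeasure a)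
    (F : ℝ → ℝ) (hmono : Monotone F) (hF0 : ∀ x, 0 ≤ F x) (hF1 : ∀ x, F x ≤ 1)
    (hint : IntegrableOn (fun y => 1 - F y) (Set.Ici (0 : ℝ)))
    (t : ℝ) (ht : 0 < t) (hFt : 0 < F t) :
    (∀ᵐ ω ∂P,
      Multipliable (fun i : ℕ => F (t + ∑ j ∈ Finset.range i, E j ω)) ∧
      0 < ∏' i : ℕ, F (t + ∑ j ∈ Finset.range i, E j ω) ∧
      (∏' i : ℕ, F (t + ∑ j ∈ Finset.range i, E j ω)) ≤ 1) ∧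
    0 < ∫ ω, (∏' i : ℕ, F (t + ∑ j ∈ Finset.range i, E j ω)) ∂P :=
  infinite_product_cluster_lengths_positive_general P a E hmeas hindep hdist F hmono hF1 hint t ht
    hFt
end

section
/- Let Y be an integrable random variable on a probability space with Y > 0 almost surely, and let s_Y ∈ (0,∞) be such that M_Y(s) = E[e^{sY}] < ∞ for all s < s_Y and M_Y(s) → ∞ as s → s_Y from the left. Let β > E[Y]. Then there exists a unique α* ∈ (−s_Y, 0) such that α*·β + M_Y(−α*) − 1 = 0. -/
open MeasureTheory ProbabilityTheory Real

open Filter Set Topology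

/-!
The function `f₀(α) = α β + M_Y(-α) - 1` is convex on `(-s_Y, 0)` because the moment generating
function is, hence continuous there. It tends to `+∞` at `-s_Y` because `M_Y` blows up at `s_Y`,
and it vanishes at `0` with derivative `β - E[Y] > 0`, so it is negative just left of `0`; the
intermediate value theorem gives a root. A second root `v` to the right of a root `u` is
impossible: choosing `w ∈ (v, 0)` with `f₀(w) < 0`, convexity puts `f₀(v)` below the chord from
`(u, 0)` to `(w, f₀(w))`, so `f₀(v) < 0`.
-/

section ConvexRoot

variable {f : ℝ → ℝ} {a b : ℝ}

lemma HasDerivAt.eventually_nhdsLT_lt {f' x : ℝ} (hf : HasDerivAt f f' x) (hf' : 0 < f') :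
    ∀ᶠ y in 𝓝[<] x, f y < f x := by
  have hslope := (hasDerivAt_iff_tendsto_slope.mp hf).mono_left (nhdsLT_le_nhdsNE x)
  filter_upwards [hslope.eventually_const_lt hf', self_mem_nhdsWithin] with y hpos (hy : y < x)
  rw [slope_def_field] at hpos
  have hneg := (div_pos_iff.mp hpos).resolve_left fun h => (sub_neg.mpr hy).not_gt h.2
  linarith [hneg.1]

lemma ConvexOn.le_of_eq_zero_of_eventually_neg (hf : ConvexOn ℝ (Ioo a b) f)
    (hb : ∀ᶠ x in 𝓝[<] b, f x < 0) {x y : ℝ} (hx : x ∈ Ioo a b) (hy : y ∈ Ioo a b)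
    (hfx : f x = 0) (hfy : f y = 0) : y ≤ x := by
  by_contra! hxy
  obtain ⟨w, hfw, hyw, hwb⟩ := (hb.and (Ioo_mem_nhdsLT hy.2)).exists
  have hslope := hf.slope_mono_adjacent hx ⟨hy.1.trans hyw, hwb⟩ hxy hyw
  simp only [hfx, hfy, sub_zero, sub_self, zero_div] at hslope
  exact (div_neg_of_neg_of_pos hfw (sub_pos.mpr hyw)).not_ge hslope

lemma ContinuousOn.exists_eq_zero_of_eventually (hab : a < b) (hf : ContinuousOn f (Ioo a b))
    (ha : ∀ᶠ x in 𝓝[>] a, 0 < f x) (hb : ∀ᶠ x in 𝓝[<] b, f x < 0) :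
    ∃ x ∈ Ioo a b, f x = 0 := by
  obtain ⟨w, hfw, hw⟩ := (hb.and (Ioo_mem_nhdsLT hab)).exists
  obtain ⟨z, hfz, hz⟩ := (ha.and (Ioo_mem_nhdsGT hw.1)).exists
  obtain ⟨x, hx, hfx⟩ := intermediate_value_Icc' hz.2.le
    (hf.mono (Icc_subset_Ioo hz.1 hw.2)) ⟨hfw.le, hfz.le⟩
  exact ⟨x, Icc_subset_Ioo hz.1 hw.2 hx, hfx⟩

theorem ConvexOn.existsUnique_eq_zero (hab : a < b) (hf : ConvexOn ℝ (Ioo a b) f)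
    (ha : ∀ᶠ x in 𝓝[>] a, 0 < f x) (hb : ∀ᶠ x in 𝓝[<] b, f x < 0) :
    ∃! x, x ∈ Ioo a b ∧ f x = 0 := by
  obtain ⟨x, hx, hfx⟩ := (hf.continuousOn isOpen_Ioo).exists_eq_zero_of_eventually hab ha hb
  exact ⟨x, ⟨hx, hfx⟩, fun y ⟨hy, hfy⟩ => le_antisymm
    (hf.le_of_eq_zero_of_eventually_neg hb hx hy hfx hfy)
    (hf.le_of_eq_zero_of_eventually_neg hb hy hx hfy hfx)⟩

end ConvexRoot

namespace ProbabilityTheory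

variable {Ω : Type*} {m : MeasurableSpace Ω} {X : Ω → ℝ} {μ : Measure Ω}

lemma convexOn_mgf : ConvexOn ℝ (integrableExpSet X μ) (mgf X μ) := by
  refine ⟨convex_integrableExpSet, fun s hs t ht a b ha hb hab => ?_⟩
  have hst := convex_integrableExpSet hs ht ha hb hab
  simp only [integrableExpSet, mem_ofPred_eq, smul_eq_mul, mgf] at hs ht hst ⊢
  rw [← integral_const_mul, ← integral_const_mul, ← integral_add (hs.const_mul a) (ht.const_mul b)]
  refine integral_mono hst ((hs.const_mul a).add (ht.const_mul b)) fun ω => ?_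
  have := convexOn_exp.2 (mem_univ (s * X ω)) (mem_univ (t * X ω)) ha hb hab
  simp only [smul_eq_mul] at this
  convert this using 2
  ring

lemma Iio_subset_interior_integrableExpSet {s : ℝ}
    (h : ∀ t < s, Integrable (fun ω ↦ exp (t * X ω)) μ) :
    Iio s ⊆ interior (integrableExpSet X μ) :=
  interior_maximal h isOpen_Iio

noncomputable def lundbergFun (X : Ω → ℝ) (μ : Measure Ω) (β α : ℝ) : ℝ :=
  α * β + mgf X μ (-α) - 1

variable {β : ℝ}

lemma lundbergFun_zero [IsProbabilityMeasure μ] : lundbergFun X μ β 0 = 0 := by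
  simp [lundbergFun]

lemma convexOn_lundbergFun : ConvexOn ℝ (-integrableExpSet X μ) (lundbergFun X μ β) := by
  refine ⟨convex_integrableExpSet.neg, fun x hx y hy a b ha hb hab => ?_⟩
  have h := convexOn_mgf.2 hx hy ha hb hab
  simp only [smul_eq_mul, lundbergFun] at h ⊢
  rw [show -(a * x + b * y) = a * -x + b * -y by ring]
  linear_combination h + hab

lemma hasDerivAt_lundbergFun_zero (h : 0 ∈ interior (integrableExpSet X μ)) :
    HasDerivAt (lundbergFun X μ β) (β - μ[X]) 0 := by
  have hmgf : HasDerivAt (mgf X μ) μ[fun ω ↦ X ω * exp (-0 * X ω)] (-0) :=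
    hasDerivAt_mgf (by rwa [neg_zero])
  refine (((hasDerivAt_mul_const β).add (hmgf.comp 0 (hasDerivAt_neg 0))).sub_const 1
    ).congr_deriv ?_
  simp [sub_eq_add_neg]

lemma eventually_lundbergFun_neg [IsProbabilityMeasure μ]
    (h : 0 ∈ interior (integrableExpSet X μ)) (hβ : μ[X] < β) :
    ∀ᶠ α in 𝓝[<] 0, lundbergFun X μ β α < 0 := by
  simpa only [lundbergFun_zero] using
    (hasDerivAt_lundbergFun_zero h).eventually_nhdsLT_lt (sub_pos.mpr hβ)

lemma tendsto_lundbergFun_atTop {s : ℝ} (h : Tendsto (mgf X μ) (𝓝[<] s) atTop) :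
    Tendsto (lundbergFun X μ β) (𝓝[>] (-s)) atTop := by
  have hlin : Tendsto (fun α : ℝ ↦ α * β) (𝓝[>] (-s)) (𝓝 (-s * β)) :=
    ((continuous_id.mul continuous_const).tendsto _).mono_left nhdsWithin_le_nhds
  exact tendsto_atTop_add_const_right _ _
    (hlin.add_atTop (h.comp tendsto_neg_nhdsGT_neg))

end ProbabilityTheory

theorem lundberg_equation_unique_negative_root_general
    {Ω : Type*} [MeasurableSpace Ω] (P : Measure Ω) [IsProbabilityMeasure P]
    (Y : Ω → ℝ)
    (sY : ℝ) (hsY : 0 < sY)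
    (hYfin : ∀ s < sY, Integrable (fun ω => Real.exp (s * Y ω)) P)
    (hYblow : Filter.Tendsto (fun s => mgf Y P s)
      (nhdsWithin sY (Set.Iio sY)) Filter.atTop)
    (β : ℝ) (hβ : ∫ ω, Y ω ∂P < β) :
    ∃! α : ℝ, α ∈ Set.Ioo (-sY) (0 : ℝ) ∧ α * β + mgf Y P (-α) - 1 = 0 := by
  have hconvex : ConvexOn ℝ (Ioo (-sY) 0) (lundbergFun Y P β) :=
    convexOn_lundbergFun.subset (fun α hα => hYfin (-α) (by linarith [hα.1])) (convex_Ioo _ _)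
  exact hconvex.existsUnique_eq_zero (neg_neg_of_pos hsY)
    ((tendsto_lundbergFun_atTop hYblow).eventually_gt_atTop 0)
    (eventually_lundbergFun_neg (Iio_subset_interior_integrableExpSet hYfin hsY) hβ)

/-- If `Y > 0` is integrable with mgf finite on `(-∞, s_Y)` blowing up at `s_Y`, and
`β > E[Y]`, then there is a unique `α* ∈ (−s_Y, 0)` with `α*β + M_Y(−α*) − 1 = 0`. -/
theorem lundberg_equation_unique_negative_root
    {Ω : Type*} [MeasurableSpace Ω] (P : Measure Ω) [IsProbabilityMeasure P]
    (Y : Ω → ℝ) (hYmeas : Measurable Y) (hYint : Integrable Y P)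
    (hYpos : ∀ᵐ ω ∂P, 0 < Y ω)
    (sY : ℝ) (hsY : 0 < sY)
    (hYfin : ∀ s < sY, Integrable (fun ω => Real.exp (s * Y ω)) P)
    (hYblow : Filter.Tendsto (fun s => mgf Y P s)
      (nhdsWithin sY (Set.Iio sY)) Filter.atTop)
    (β : ℝ) (hβ : ∫ ω, Y ω ∂P < β) :
    ∃! α : ℝ, α ∈ Set.Ioo (-sY) (0 : ℝ) ∧ α * β + mgf Y P (-α) - 1 = 0 :=
  lundberg_equation_unique_negative_root_general P Y sY hsY hYfin hYblow β hβ
end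

section
/- Let f : ℝ × ℝ → ℝ be a convex function (jointly convex in both variables), let I ⊆ ℝ be a convex set, and let α : ℝ → ℝ be a function such that for every r ∈ I one has f(r, α(r)) = 0 and f(r, y) > 0 for every y > α(r). Then α is concave on I; that is, for all r, s ∈ I and λ ∈ [0,1], α(λr + (1−λ)s) ≥ λα(r) + (1−λ)α(s). -/
/-- If `f : ℝ × ℝ → ℝ` is jointly convex, `I` is convex, and for each `r ∈ I` the value
`α r` is a root of `f(r, ·)` above which `f(r, ·)` is strictly positive (i.e. `α r` is the
maximal root), then `α` is concave on `I`. -/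
theorem maximal_root_concave
    (f : ℝ × ℝ → ℝ) (hf : ConvexOn ℝ Set.univ f)
    (I : Set ℝ) (hI : Convex ℝ I)
    (α : ℝ → ℝ)
    (hroot : ∀ r ∈ I, f (r, α r) = 0)
    (hpos : ∀ r ∈ I, ∀ y, α r < y → 0 < f (r, y)) :
    ∀ r ∈ I, ∀ s ∈ I, ∀ lam : ℝ, lam ∈ Set.Icc (0 : ℝ) 1 →
      lam * α r + (1 - lam) * α s ≤ α (lam * r + (1 - lam) * s) := by
  intro r hr s hs lam hlam
  obtain ⟨h0, h1⟩ := hlam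
  have hmem : lam * r + (1 - lam) * s ∈ I := by
    have := hI hr hs h0 (by linarith : (0:ℝ) ≤ 1 - lam) (by ring)
    simpa [smul_eq_mul] using this
  by_contra h
  push_neg at h
  have hgt := hpos _ hmem _ h
  have hconv := hf.2 (Set.mem_univ (r, α r)) (Set.mem_univ (s, α s)) h0
    (by linarith : (0:ℝ) ≤ 1 - lam) (by ring)
  have : f (lam * r + (1 - lam) * s, lam * α r + (1 - lam) * α s) ≤ 0 := by
    simpa [Prod.smul_mk, smul_eq_mul, Prod.mk_add_mk, hroot r hr, hroot s hs] using hconv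
  linarith
end

section
/- Let U and Y be integrable random variables on a probability space whose moment generating functions M_U(s) = E[e^{sU}] and M_Y(s) = E[e^{sY}] are finite for all s in a neighborhood of 0, let β > E[Y], let a > 0 and c ∈ ℝ, and let α : ℝ → ℝ be differentiable at 0 with α(0) = 0 and satisfy α(r)·β + M_U(r)·M_Y(−α(r)) − 1 = 0 for all r in a neighborhood of 0. Define θ(r) = −c·r − α(r)·β·a. Then θ(0) = 0 and θ'(0) = −c + aβ·E[U]/(β − E[Y]); in particular, if the net profit condition c > aβ·E[U]/(β − E[Y]) holds, then θ'(0) < 0. -/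
/-!
Differentiating the Lundberg identity `α(r)β + M_U(r) M_Y(−α(r)) = 1` at `r = 0`, where
`α(0) = 0`, `M_U(0) = M_Y(0) = 1`, `M_U'(0) = E[U]` and `M_Y'(0) = E[Y]`, gives
`α'(0)β + E[U] − E[Y]α'(0) = 0`, so `α'(0) = −E[U]/(β − E[Y])`; then
`θ'(0) = −c − α'(0)βa`.
-/

open MeasureTheory ProbabilityTheory Real Filter Topology

lemma hasDerivAt_mgf_zero_of_eventually_integrable {Ω : Type*} [MeasurableSpace Ω]
    {μ : Measure Ω} {X : Ω → ℝ}
    (h : ∀ᶠ s in 𝓝 (0 : ℝ), Integrable (fun ω => exp (s * X ω)) μ) :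
    HasDerivAt (mgf X μ) μ[X] 0 := by
  simpa using hasDerivAt_mgf (t := 0) (mem_interior_iff_mem_nhds.2 h)

lemma hasDerivAt_of_lundberg_identity {f g α : ℝ → ℝ} {β m n : ℝ}
    (hf : HasDerivAt f m 0) (hg : HasDerivAt g n 0) (hf0 : f 0 = 1) (hg0 : g 0 = 1)
    (hα : DifferentiableAt ℝ α 0) (hα0 : α 0 = 0) (hβ : β ≠ n)
    (hid : ∀ᶠ r in 𝓝 0, α r * β + f r * g (-α r) - 1 = 0) :
    HasDerivAt α (-m / (β - n)) 0 := by
  set α' := deriv α 0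
  have hg' : HasDerivAt (fun r => g (-α r)) (n * -α') 0 := by
    rw [← neg_zero, ← hα0] at hg
    exact hg.comp 0 hα.hasDerivAt.neg
  have hlhs : HasDerivAt (fun r => α r * β + f r * g (-α r) - 1)
      (α' * β + (m * g (-α 0) + f 0 * (n * -α'))) 0 :=
    ((hα.hasDerivAt.mul_const β).add (hf.mul hg')).sub_const 1
  have hzero : α' * β + (m * 1 + 1 * (n * -α')) = 0 := by
    have := hlhs.unique ((hasDerivAt_const (0 : ℝ) (0 : ℝ)).congr_of_eventuallyEq hid)
    rwa [hα0, neg_zero, hf0, hg0] at this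
  have hα' : α' = -m / (β - n) := by
    field_simp [sub_ne_zero.2 hβ]
    linarith
  exact hα' ▸ hα.hasDerivAt

theorem theta_derivative_at_zero_general
    {Ω : Type*} [MeasurableSpace Ω] (P : Measure Ω) [IsProbabilityMeasure P]
    (U Y : Ω → ℝ)
    (hUfin : ∀ᶠ s in nhds (0 : ℝ), Integrable (fun ω => Real.exp (s * U ω)) P)
    (hYfin : ∀ᶠ s in nhds (0 : ℝ), Integrable (fun ω => Real.exp (s * Y ω)) P)
    (β : ℝ) (hβ : ∫ ω, Y ω ∂P < β)
    (a : ℝ) (c : ℝ)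
    (α : ℝ → ℝ) (hα : DifferentiableAt ℝ α 0) (hα0 : α 0 = 0)
    (hid : ∀ᶠ r in nhds (0 : ℝ), α r * β + mgf U P r * mgf Y P (-(α r)) - 1 = 0)
    (θ : ℝ → ℝ) (hθ : ∀ r, θ r = -c * r - α r * β * a) :
    θ 0 = 0 ∧
    deriv θ 0 = -c + a * β * (∫ ω, U ω ∂P) / (β - ∫ ω, Y ω ∂P) ∧
    (a * β * (∫ ω, U ω ∂P) / (β - ∫ ω, Y ω ∂P) < c → deriv θ 0 < 0) := by
  have hαderiv : HasDerivAt α (-P[U] / (β - P[Y])) 0 :=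
    hasDerivAt_of_lundberg_identity (hasDerivAt_mgf_zero_of_eventually_integrable hUfin)
      (hasDerivAt_mgf_zero_of_eventually_integrable hYfin) mgf_zero mgf_zero hα hα0
      hβ.ne' hid
  have hθderiv : HasDerivAt θ (-c * 1 - -P[U] / (β - P[Y]) * β * a) 0 := by
    rw [funext hθ]
    exact ((hasDerivAt_id 0).const_mul (-c)).sub ((hαderiv.mul_const β).mul_const a)
  have hderiv : deriv θ 0 = -c + a * β * P[U] / (β - P[Y]) := by
    rw [hθderiv.deriv]
    ring
  exact ⟨by simp [hθ, hα0], hderiv, fun h => by linarith⟩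

/-- With `θ(r) = −cr − α(r)βa`, where `α` solves the Lundberg identity near `0` with
`α(0) = 0`, one has `θ(0) = 0` and `θ'(0) = −c + aβ E[U]/(β − E[Y])`; in particular the
net profit condition `c > aβ E[U]/(β − E[Y])` forces `θ'(0) < 0`. -/
theorem theta_derivative_at_zero
    {Ω : Type*} [MeasurableSpace Ω] (P : Measure Ω) [IsProbabilityMeasure P]
    (U Y : Ω → ℝ) (hUmeas : Measurable U) (hYmeas : Measurable Y)
    (hUint : Integrable U P) (hYint : Integrable Y P)
    (hUfin : ∀ᶠ s in nhds (0 : ℝ), Integrable (fun ω => Real.exp (s * U ω)) P)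
    (hYfin : ∀ᶠ s in nhds (0 : ℝ), Integrable (fun ω => Real.exp (s * Y ω)) P)
    (β : ℝ) (hβ : ∫ ω, Y ω ∂P < β)
    (a : ℝ) (ha : 0 < a) (c : ℝ)
    (α : ℝ → ℝ) (hα : DifferentiableAt ℝ α 0) (hα0 : α 0 = 0)
    (hid : ∀ᶠ r in nhds (0 : ℝ), α r * β + mgf U P r * mgf Y P (-(α r)) - 1 = 0)
    (θ : ℝ → ℝ) (hθ : ∀ r, θ r = -c * r - α r * β * a) :
    θ 0 = 0 ∧
    deriv θ 0 = -c + a * β * (∫ ω, U ω ∂P) / (β - ∫ ω, Y ω ∂P) ∧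
    (a * β * (∫ ω, U ω ∂P) / (β - ∫ ω, Y ω ∂P) < c → deriv θ 0 < 0) :=
  theta_derivative_at_zero_general P U Y hUfin hYfin β hβ a c α hα hα0 hid θ hθ
end

section
/- Let β, γ, μ > 0 with βγ > 1, and let 0 ≤ r < μ. Then the quadratic equation βα² + (βγ − 1)α + (μγ/(μ − r) − γ) = 0 has two distinct real solutions α if and only if r < (βγ−1)²μ/(βγ+1)²; it has exactly one real solution if r = (βγ−1)²μ/(βγ+1)², and no real solution if r > (βγ−1)²μ/(βγ+1)². -/
open Real

/-- For `0 ≤ r < μ`, the quadratic `βα² + (βγ−1)α + (μγ/(μ−r) − γ) = 0` has two distinct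
real roots iff `r < r_max = (βγ−1)²μ/(βγ+1)²`, exactly one root if `r = r_max`, and no
root if `r > r_max`. -/
theorem lundberg_quadratic_root_trichotomy
    (β γ μ : ℝ) (hβ : 0 < β) (hγ : 0 < γ) (hμ : 0 < μ) (hβγ : 1 < β * γ)
    (r : ℝ) (hr0 : 0 ≤ r) (hrμ : r < μ) :
    ((∃ α₁ α₂ : ℝ, α₁ ≠ α₂ ∧
        β * α₁ ^ 2 + (β * γ - 1) * α₁ + (μ * γ / (μ - r) - γ) = 0 ∧
        β * α₂ ^ 2 + (β * γ - 1) * α₂ + (μ * γ / (μ - r) - γ) = 0) ↔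
      r < (β * γ - 1) ^ 2 * μ / (β * γ + 1) ^ 2) ∧
    (r = (β * γ - 1) ^ 2 * μ / (β * γ + 1) ^ 2 →
      ∃! α : ℝ, β * α ^ 2 + (β * γ - 1) * α + (μ * γ / (μ - r) - γ) = 0) ∧
    ((β * γ - 1) ^ 2 * μ / (β * γ + 1) ^ 2 < r →
      ¬∃ α : ℝ, β * α ^ 2 + (β * γ - 1) * α + (μ * γ / (μ - r) - γ) = 0) := by
  have hμr : (0:ℝ) < μ - r := by linarith
  have hβ0 : β ≠ 0 := ne_of_gt hβ
  have hden : (0:ℝ) < (β * γ + 1) ^ 2 := by positivity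
  set b : ℝ := β * γ - 1 with hb
  set c : ℝ := μ * γ / (μ - r) - γ with hc
  have hform : ∀ x : ℝ, β * x ^ 2 + b * x + c = β * (x * x) + b * x + c := by
    intro x; ring
  have hkey : discrim β b c = ((β * γ - 1) ^ 2 * μ - r * (β * γ + 1) ^ 2) / (μ - r) := by
    rw [discrim, hb, hc]
    field_simp
    ring
  have hlt : r < (β * γ - 1) ^ 2 * μ / (β * γ + 1) ^ 2 ↔ 0 < discrim β b c := by
    rw [hkey, lt_div_iff₀ hden, lt_div_iff₀ hμr]
    constructor <;> intro h <;> nlinarith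
  have heq : r = (β * γ - 1) ^ 2 * μ / (β * γ + 1) ^ 2 ↔ discrim β b c = 0 := by
    rw [hkey, div_eq_zero_iff, eq_div_iff (ne_of_gt hden)]
    constructor
    · intro h; left; nlinarith
    · rintro (h | h)
      · nlinarith
      · linarith
  have hgt : (β * γ - 1) ^ 2 * μ / (β * γ + 1) ^ 2 < r ↔ discrim β b c < 0 := by
    rw [hkey, div_lt_iff₀ hden, div_neg_iff]
    constructor
    · intro h; right; exact ⟨by nlinarith, hμr⟩
    · rintro (⟨_, h2⟩ | ⟨h1, _⟩)
      · linarith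
      · nlinarith
  refine ⟨?_, ?_, ?_⟩
  · constructor
    · rintro ⟨α₁, α₂, hne, h1, h2⟩
      rw [hform] at h1 h2
      by_contra hnot
      have hD : discrim β b c ≤ 0 := le_of_not_gt (fun h => hnot (hlt.mpr h))
      rcases lt_or_eq_of_le hD with h | h
      · exact quadratic_ne_zero_of_discrim_ne_sq (fun s => by nlinarith [sq_nonneg s]) α₁ h1
      · have e1 := (quadratic_eq_zero_iff_of_discrim_eq_zero hβ0 h α₁).mp h1
        have e2 := (quadratic_eq_zero_iff_of_discrim_eq_zero hβ0 h α₂).mp h2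
        exact hne (e1.trans e2.symm)
    · intro hrlt
      have hD : 0 < discrim β b c := hlt.mp hrlt
      set s := Real.sqrt (discrim β b c) with hs
      have hs2 : discrim β b c = s * s := (Real.mul_self_sqrt hD.le).symm
      have hspos : 0 < s := Real.sqrt_pos.mpr hD
      refine ⟨(-b + s) / (2 * β), (-b - s) / (2 * β), ?_, ?_, ?_⟩
      · intro h
        rw [div_eq_div_iff (by positivity) (by positivity)] at h
        nlinarith
      · rw [hform]; exact (quadratic_eq_zero_iff hβ0 hs2 _).mpr (Or.inl rfl)
      · rw [hform]; exact (quadratic_eq_zero_iff hβ0 hs2 _).mpr (Or.inr rfl)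
  · intro hreq
    have hD : discrim β b c = 0 := heq.mp hreq
    refine ⟨-b / (2 * β), ?_, ?_⟩
    · show β * (-b / (2 * β)) ^ 2 + b * (-b / (2 * β)) + c = 0
      rw [hform]; exact (quadratic_eq_zero_iff_of_discrim_eq_zero hβ0 hD _).mpr rfl
    · intro y hy
      rw [hform] at hy
      exact (quadratic_eq_zero_iff_of_discrim_eq_zero hβ0 hD y).mp hy
  · rintro hrgt ⟨α, hα⟩
    rw [hform] at hα
    have hD : discrim β b c < 0 := hgt.mp hrgt
    exact quadratic_ne_zero_of_discrim_ne_sq (fun s => by nlinarith [sq_nonneg s]) α hα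
end

section
/- Let a, β, γ > 0 and define g : (a, ∞) → ℝ by g(λ) = exp(−((βγ−1)/β)·λ)·(λ − a)^{a/β − 1}. Then g is twice differentiable on (a, ∞) and for every λ > a it satisfies the second-order linear ODE β(λ − a)·g''(λ) − (λ + β(−2 + aγ − γλ))·g'(λ) + (βγ − 1)·g(λ) = 0. -/
/-!
With `x = λ - a`, `c = -(βγ - 1)/β` and `p = a/β - 1` the equation is `β` times
`x g'' - (c x + p - 1) g' - c g = 0`, which `e^{cλ} x^p` solves for all `c` and `p`:
writing `f_q = e^{cλ} x^q`, one has `f_q' = c f_q + q f_{q-1}` and `x f_{q-1} = f_q`, so both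
sides reduce to the same combination of `f_p` and `f_{p-1}`.
-/

open Real Filter Topology

noncomputable def expMulRpow (c a p t : ℝ) : ℝ := exp (c * t) * (t - a) ^ p

section ExpMulRpow

variable {c a p t : ℝ}

theorem hasDerivAt_expMulRpow (ht : t ≠ a) :
    HasDerivAt (expMulRpow c a p)
      (c * expMulRpow c a p t + p * expMulRpow c a (p - 1) t) t := by
  have hexp : HasDerivAt (fun s => exp (c * s)) (exp (c * t) * c) t := by
    simpa using ((hasDerivAt_id t).const_mul c).exp
  have hpow : HasDerivAt (fun s => (s - a) ^ p) (1 * p * (t - a) ^ (p - 1)) t :=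
    ((hasDerivAt_id t).sub_const a).rpow_const (Or.inl (sub_ne_zero.mpr ht))
  exact (hexp.mul hpow).congr_deriv (by simp only [expMulRpow]; ring)

theorem deriv_expMulRpow_eventuallyEq (ht : t ≠ a) :
    deriv (expMulRpow c a p) =ᶠ[𝓝 t]
      fun s => c * expMulRpow c a p s + p * expMulRpow c a (p - 1) s := by
  filter_upwards [eventually_ne_nhds ht] with s hs using (hasDerivAt_expMulRpow hs).deriv

theorem hasDerivAt_deriv_expMulRpow (ht : t ≠ a) :
    HasDerivAt (deriv (expMulRpow c a p))
      (c * (c * expMulRpow c a p t + p * expMulRpow c a (p - 1) t) +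
        p * (c * expMulRpow c a (p - 1) t + (p - 1) * expMulRpow c a (p - 1 - 1) t)) t :=
  (((hasDerivAt_expMulRpow ht).const_mul c).add
    ((hasDerivAt_expMulRpow ht).const_mul p)).congr_of_eventuallyEq
    (deriv_expMulRpow_eventuallyEq ht)

theorem sub_mul_expMulRpow_sub_one (ht : t ≠ a) :
    (t - a) * expMulRpow c a (p - 1) t = expMulRpow c a p t := by
  have hx : t - a ≠ 0 := sub_ne_zero.mpr ht
  rw [expMulRpow, expMulRpow, rpow_sub_one hx]
  field_simp

theorem expMulRpow_ode (ht : t ≠ a) :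
    (t - a) * deriv (deriv (expMulRpow c a p)) t
        - (c * (t - a) + p - 1) * deriv (expMulRpow c a p) t - c * expMulRpow c a p t = 0 := by
  rw [(hasDerivAt_deriv_expMulRpow ht).deriv, (hasDerivAt_expMulRpow ht).deriv]
  have h₁ := sub_mul_expMulRpow_sub_one (c := c) (p := p) ht
  have h₂ := sub_mul_expMulRpow_sub_one (c := c) (p := p - 1) ht
  linear_combination c * p * h₁ + p * (p - 1) * h₂

end ExpMulRpow

theorem stationary_density_ode_general
    (a β γ : ℝ) (hβ : 0 < β)
    (g : ℝ → ℝ)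
    (hg : ∀ l : ℝ, g l = Real.exp (-((β * γ - 1) / β) * l) * (l - a) ^ (a / β - 1)) :
    ∀ l : ℝ, a < l →
      DifferentiableAt ℝ g l ∧ DifferentiableAt ℝ (deriv g) l ∧
      β * (l - a) * deriv (deriv g) l - (l + β * (-2 + a * γ - γ * l)) * deriv g l +
        (β * γ - 1) * g l = 0 := by
  intro l hl
  obtain rfl : g = expMulRpow (-((β * γ - 1) / β)) a (a / β - 1) := funext hg
  refine ⟨(hasDerivAt_expMulRpow hl.ne').differentiableAt,
    (hasDerivAt_deriv_expMulRpow hl.ne').differentiableAt, ?_⟩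
  have hcoeff : β * (-((β * γ - 1) / β) * (l - a) + (a / β - 1) - 1)
      = l + β * (-2 + a * γ - γ * l) := by
    field_simp
    ring
  have hrate : β * -((β * γ - 1) / β) = -(β * γ - 1) := by
    field_simp
  linear_combination β * expMulRpow_ode hl.ne'
    + deriv (expMulRpow (-((β * γ - 1) / β)) a (a / β - 1)) l * hcoeff
    + expMulRpow (-((β * γ - 1) / β)) a (a / β - 1) l * hrate

/-- The function `g(λ) = e^{−((βγ−1)/β)λ} (λ−a)^{a/β − 1}` is twice differentiable on
`(a, ∞)` and solves the ODE
`β(λ−a) g'' − (λ + β(−2 + aγ − γλ)) g' + (βγ − 1) g = 0` there. -/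
theorem stationary_density_ode
    (a β γ : ℝ) (ha : 0 < a) (hβ : 0 < β) (hγ : 0 < γ)
    (g : ℝ → ℝ)
    (hg : ∀ l : ℝ, g l = Real.exp (-((β * γ - 1) / β) * l) * (l - a) ^ (a / β - 1)) :
    ∀ l : ℝ, a < l →
      DifferentiableAt ℝ g l ∧ DifferentiableAt ℝ (deriv g) l ∧
      β * (l - a) * deriv (deriv g) l - (l + β * (-2 + a * γ - γ * l)) * deriv g l +
        (β * γ - 1) * g l = 0 :=
  stationary_density_ode_general a β γ hβ g hg
end
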